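/- In Young's lattice, the number of saturated chains from the empty partition to a partition λ of n equals f^λ, the number of standard Young tableaux of shape λ, and Σ_{λ ⊢ n} (f^λ)² = n!. -/

import Mathlib

/-!
Removing the cell that holds the largest entry of a standard Young tableau, or the top of a
saturated chain, shows that both counts satisfy `f μ = ∑_{ν ⋖ μ} f ν` with `f ∅ = 1`, so they agree.

Young's lattice is a differential poset. Since it is distributive, two distinct diagrams have as
many common upper covers as common lower covers (at most one of each); and a diagram has exactly one
more addable than removable cell, the extra one lying in the first row. Hence `DU = UD + I` for the
operators summing over upper and lower covers, which gives `∑_{λ ⋗ ν} f^λ = (|ν| + 1) f^ν` by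
induction on `|ν|`, and then
`∑_{|λ| = n+1} (f^λ)² = ∑_{|ν| = n} f^ν ∑_{λ ⋗ ν} f^λ = (n + 1) ∑_{|ν| = n} (f^ν)²`.
-/

/-- A standard Young tableau of shape `μ`: a filling of the cells of `μ` by the
numbers `0, 1, …, |μ| - 1`, each used exactly once, strictly increasing along
rows and columns (and zero outside the diagram). -/
def IsSYT (μ : YoungDiagram) (T : ℕ → ℕ → ℕ) : Prop :=
  (∀ i j : ℕ, (i, j + 1) ∈ μ → T i j < T i (j + 1)) ∧
  (∀ i j : ℕ, (i + 1, j) ∈ μ → T i j < T (i + 1) j) ∧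
  Set.BijOn (fun c : ℕ × ℕ => T c.1 c.2) (↑μ.cells) (Set.Iio μ.card) ∧
  (∀ i j : ℕ, (i, j) ∉ μ → T i j = 0)

/-- A saturated chain of length `n` in Young's lattice from `∅` to `μ`. -/
def IsSaturatedChain (n : ℕ) (μ : YoungDiagram) (c : Fin (n + 1) → YoungDiagram) : Prop :=
  c 0 = ⊥ ∧ c (Fin.last n) = μ ∧ ∀ i : Fin n, c i.castSucc ⋖ c i.succ

open Finset
open scoped Classical Nat

section ModularLattice

variable {α : Type*} [Lattice α] [IsWeakUpperModularLattice α] [IsWeakLowerModularLattice α]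

/-- Two distinct elements have a common upper cover only if it is their join, and a common lower
cover only if it is their meet; weak modularity says the join is one iff the meet is one. -/
theorem ncard_setOf_covBy_covBy {a b : α} (hab : a ≠ b) :
    {c | a ⋖ c ∧ b ⋖ c}.ncard = {c | c ⋖ a ∧ c ⋖ b}.ncard := by
  have hup : {c | a ⋖ c ∧ b ⋖ c} = {c | c = a ⊔ b ∧ a ⋖ a ⊔ b ∧ b ⋖ a ⊔ b} := by
    ext c
    refine ⟨fun ⟨ha, hb⟩ => ?_, fun ⟨rfl, h⟩ => h⟩
    obtain rfl := ha.wcovBy.sup_eq hb.wcovBy hab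
    exact ⟨rfl, ha, hb⟩
  have hdown : {c | c ⋖ a ∧ c ⋖ b} = {c | c = a ⊓ b ∧ a ⊓ b ⋖ a ∧ a ⊓ b ⋖ b} := by
    ext c
    refine ⟨fun ⟨ha, hb⟩ => ?_, fun ⟨rfl, h⟩ => h⟩
    obtain rfl := ha.wcovBy.inf_eq hb.wcovBy hab
    exact ⟨rfl, ha, hb⟩
  have hiff : a ⋖ a ⊔ b ∧ b ⋖ a ⊔ b ↔ a ⊓ b ⋖ a ∧ a ⊓ b ⋖ b :=
    ⟨fun ⟨ha, hb⟩ => ⟨inf_covBy_of_covBy_sup_of_covBy_sup_left ha hb,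
        inf_covBy_of_covBy_sup_of_covBy_sup_right ha hb⟩,
      fun ⟨ha, hb⟩ => ⟨covBy_sup_of_inf_covBy_of_inf_covBy_left ha hb,
        covBy_sup_of_inf_covBy_of_inf_covBy_right ha hb⟩⟩
  rw [hup, hdown, hiff]
  by_cases h : a ⊓ b ⋖ a ∧ a ⊓ b ⋖ b <;> simp [h]

end ModularLattice

namespace YoungDiagram

variable {μ ν : YoungDiagram}

theorem cells_injective : Function.Injective YoungDiagram.cells := fun _ _ => YoungDiagram.ext

theorem card_strictMono : StrictMono YoungDiagram.card := fun _ _ h => Finset.card_lt_card h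

theorem card_eq_zero_iff : μ.card = 0 ↔ μ = ⊥ := by
  rw [Finset.card_eq_zero, ← cells_bot, cells_injective.eq_iff]

def insertCell (ν : YoungDiagram) (x : ℕ × ℕ) (hx : ∀ y < x, y ∈ ν) : YoungDiagram where
  cells := insert x ν.cells
  isLowerSet a b hba ha := by
    simp only [coe_insert, Set.mem_insert_iff, mem_coe, mem_cells] at ha ⊢
    rcases ha with rfl | ha
    · exact hba.eq_or_lt.imp id (hx b)
    · exact Or.inr (ν.isLowerSet hba ha)

def eraseCell (μ : YoungDiagram) (x : ℕ × ℕ) (hx : ∀ y, x < y → y ∉ μ) : YoungDiagram where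
  cells := μ.cells.erase x
  isLowerSet a b hba ha := by
    simp only [coe_erase, Set.mem_sdiff, mem_coe, mem_cells, Set.mem_singleton_iff] at ha ⊢
    refine ⟨μ.isLowerSet hba ha.1, ?_⟩
    rintro rfl
    exact hx a (hba.lt_of_ne fun h => ha.2 h.symm) ha.1

theorem covBy_iff_le_and_card_eq : ν ⋖ μ ↔ ν ≤ μ ∧ μ.card = ν.card + 1 := by
  refine ⟨fun h => ⟨h.le, ?_⟩, fun ⟨hle, hc⟩ => ⟨hle.lt_of_ne ?_, fun ρ h₁ h₂ => ?_⟩⟩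
  · -- a minimal cell of `μ \ ν` can be added to `ν`, and the cover forces the result to be `μ`
    have hne : ∃ x, x ∈ μ ∧ x ∉ ν := Set.exists_of_ssubset h.lt
    obtain ⟨x, ⟨hxμ, hxν⟩, hmin⟩ := exists_minimal_of_wellFoundedLT _ hne
    have hx : ∀ y < x, y ∈ ν := fun y hy => by
      by_contra hyν
      exact hy.not_ge (hmin ⟨μ.isLowerSet hy.le hxμ, hyν⟩ hy.le)
    have hle : ν.insertCell x hx ≤ μ := Finset.insert_subset hxμ h.le
    have hlt : ν < ν.insertCell x hx := Finset.ssubset_insert hxν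
    rw [← (hle.eq_of_not_lt (h.2 hlt))]
    exact Finset.card_insert_of_notMem hxν
  · rintro rfl
    exact (Nat.succ_ne_self _) hc.symm
  · have := card_strictMono h₁
    have := card_strictMono h₂
    omega

theorem card_eq_of_covBy (h : ν ⋖ μ) : μ.card = ν.card + 1 := (covBy_iff_le_and_card_eq.1 h).2

theorem ne_bot_of_covBy (h : ν ⋖ μ) : μ ≠ ⊥ := (bot_le.trans_lt h.lt).ne'

theorem exists_cells_eq_insert_of_covBy (h : ν ⋖ μ) : ∃ x ∉ ν, μ.cells = insert x ν.cells := by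
  have hsdiff : #(μ.cells \ ν.cells) = 1 := by
    rw [card_sdiff_of_subset h.le]
    exact Nat.sub_eq_of_eq_add' (card_eq_of_covBy h)
  obtain ⟨x, hx, hxμ⟩ :=
    (Finset.covBy_iff_card_sdiff_eq_one.2 ⟨h.le, hsdiff⟩).exists_finset_insert
  exact ⟨x, hx, hxμ.symm⟩

theorem mem_of_lt_of_cells_eq_insert {x : ℕ × ℕ}
    (hcells : μ.cells = insert x ν.cells) {y : ℕ × ℕ} (hy : y < x) : y ∈ ν := by
  have hyμ : y ∈ μ.cells := μ.isLowerSet hy.le (hcells ▸ mem_insert_self x ν.cells)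
  rw [hcells, mem_insert] at hyμ
  exact hyμ.resolve_left hy.ne

theorem notMem_of_lt_of_cells_eq_insert {x : ℕ × ℕ} (hx : x ∉ ν)
    (hcells : μ.cells = insert x ν.cells) {y : ℕ × ℕ} (hy : x < y) : y ∉ μ := by
  intro hyμ
  rw [← mem_cells, hcells, mem_insert] at hyμ
  exact hx (ν.isLowerSet hy.le (hyμ.resolve_left hy.ne'))

theorem covBy_insertCell {x : ℕ × ℕ} (hx : ∀ y < x, y ∈ ν) (hxν : x ∉ ν) :
    ν ⋖ ν.insertCell x hx :=
  covBy_iff_le_and_card_eq.2 ⟨subset_insert _ _, card_insert_of_notMem hxν⟩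

theorem eraseCell_covBy {x : ℕ × ℕ} (hx : ∀ y, x < y → y ∉ μ) (hxμ : x ∈ μ) :
    μ.eraseCell x hx ⋖ μ :=
  covBy_iff_le_and_card_eq.2 ⟨erase_subset _ _, (card_erase_add_one hxμ).symm⟩

theorem finite_setOf_card_eq (n : ℕ) : {μ : YoungDiagram | μ.card = n}.Finite := by
  refine ((range n ×ˢ range n).powerset.finite_toSet.preimage cells_injective.injOn).subset ?_
  rintro μ rfl
  rw [Set.mem_preimage, mem_coe, mem_powerset]
  rintro ⟨i, j⟩ hij
  have hi : i < μ.colLen j := mem_iff_lt_colLen.1 hij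
  have hj : j < μ.rowLen i := mem_iff_lt_rowLen.1 hij
  have hcol : μ.colLen j ≤ μ.card := μ.colLen_eq_card ▸ card_filter_le _ _
  have hrow : μ.rowLen i ≤ μ.card := μ.rowLen_eq_card ▸ card_filter_le _ _
  rw [mem_product, mem_range, mem_range]
  omega

noncomputable def withCard (n : ℕ) : Finset YoungDiagram := (finite_setOf_card_eq n).toFinset

noncomputable def upCovers (ν : YoungDiagram) : Finset YoungDiagram :=
  (withCard (ν.card + 1)).filter (ν ⋖ ·)

noncomputable def downCovers (μ : YoungDiagram) : Finset YoungDiagram :=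
  (withCard (μ.card - 1)).filter (· ⋖ μ)

@[simp] theorem mem_withCard {n : ℕ} : μ ∈ withCard n ↔ μ.card = n := by simp [withCard]

@[simp] theorem mem_upCovers : μ ∈ upCovers ν ↔ ν ⋖ μ := by
  simp only [upCovers, mem_filter, mem_withCard, and_iff_right_iff_imp]
  exact card_eq_of_covBy

@[simp] theorem mem_downCovers : ν ∈ downCovers μ ↔ ν ⋖ μ := by
  simp only [downCovers, mem_filter, mem_withCard, and_iff_right_iff_imp]
  intro h
  have := card_eq_of_covBy h
  omega

theorem withCard_zero : withCard 0 = {⊥} := by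
  ext; rw [mem_withCard, mem_singleton, card_eq_zero_iff]

def removableRows (μ : YoungDiagram) : Finset ℕ :=
  (range (μ.colLen 0)).filter fun i => μ.rowLen (i + 1) < μ.rowLen i

theorem mem_removableRows {i : ℕ} : i ∈ μ.removableRows ↔ μ.rowLen (i + 1) < μ.rowLen i := by
  rw [removableRows, mem_filter, mem_range, and_iff_right_iff_imp, ← mem_iff_lt_colLen,
    mem_iff_lt_rowLen]
  omega

theorem mem_of_lt_of_forall_rowLen_lt {i : ℕ} (hi : ∀ k < i, ν.rowLen i < ν.rowLen k)
    {y : ℕ × ℕ} (hy : y < (i, ν.rowLen i)) : y ∈ ν := by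
  obtain ⟨a, b⟩ := y
  obtain ⟨ha, hb⟩ := Prod.mk_le_mk.1 hy.le
  rw [mem_iff_lt_rowLen]
  rcases ha.eq_or_lt with rfl | ha
  · exact hb.lt_of_ne fun h => hy.ne (by rw [h])
  · exact hb.trans_lt (hi a ha)

theorem notMem_of_lt_of_rowLen_succ_lt {i : ℕ} (hi : μ.rowLen (i + 1) < μ.rowLen i)
    {y : ℕ × ℕ} (hy : (i, μ.rowLen i - 1) < y) : y ∉ μ := by
  obtain ⟨a, b⟩ := y
  obtain ⟨ha, hb⟩ := Prod.mk_le_mk.1 hy.le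
  rw [mem_iff_lt_rowLen]
  rcases ha.eq_or_lt with rfl | ha
  · have : b ≠ μ.rowLen i - 1 := fun h => hy.ne (by rw [h])
    omega
  · have := μ.rowLen_anti (i + 1) a ha
    omega

/-- A diagram can grow in row `0`, and in row `i + 1` exactly when it can shrink in row `i`. -/
theorem card_upCovers (ν : YoungDiagram) : #(upCovers ν) = #(removableRows ν) + 1 := by
  have haddable : ∀ i ∈ insert 0 ((removableRows ν).image (· + 1)),
      ∀ k < i, ν.rowLen i < ν.rowLen k := by
    simp only [mem_insert, mem_image, mem_removableRows]
    rintro i (rfl | ⟨i, hi, rfl⟩) k hk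
    · omega
    · exact hi.trans_le (ν.rowLen_anti k i (by omega))
  rw [← card_image_of_injective (removableRows ν) (add_left_injective 1),
    ← card_insert_of_notMem (s := (removableRows ν).image (· + 1)) (a := 0) (by simp)]
  symm
  refine card_bij (fun i hi => ν.insertCell (i, ν.rowLen i)
      fun _ => mem_of_lt_of_forall_rowLen_lt (haddable i hi))
    (fun i _ => ?_) (fun i _ j _ hij => ?_) ?_
  · exact mem_upCovers.2 (covBy_insertCell _ (by simp [mem_iff_lt_rowLen]))
  · have hcells : insert (i, ν.rowLen i) ν.cells = insert (j, ν.rowLen j) ν.cells :=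
      congrArg cells hij
    have hmem := hcells ▸ mem_insert_self (i, ν.rowLen i) ν.cells
    rw [mem_insert, mem_cells, mem_iff_lt_rowLen] at hmem
    exact congrArg Prod.fst (hmem.resolve_right (lt_irrefl _))
  · intro μ hμ
    obtain ⟨⟨i, j⟩, hx, hcells⟩ := exists_cells_eq_insert_of_covBy (mem_upCovers.1 hμ)
    have hbelow := fun y (hy : y < (i, j)) => mem_of_lt_of_cells_eq_insert hcells hy
    have hj : j = ν.rowLen i := by
      rw [mem_iff_lt_rowLen, not_lt] at hx
      refine le_antisymm (not_lt.1 fun hlt => ?_) hx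
      exact lt_irrefl _
        (mem_iff_lt_rowLen.1 (hbelow (i, ν.rowLen i) (Prod.mk_lt_mk_iff_right.2 hlt)))
    subst hj
    refine ⟨i, ?_, YoungDiagram.ext hcells.symm⟩
    simp only [mem_insert, mem_image, mem_removableRows]
    obtain _ | k := i
    · exact Or.inl rfl
    · exact Or.inr ⟨k, mem_iff_lt_rowLen.1
        (hbelow (k, _) (Prod.mk_lt_mk_iff_left.2 k.lt_succ_self)), rfl⟩

theorem card_downCovers (μ : YoungDiagram) : #(downCovers μ) = #(removableRows μ) := by
  symm
  refine card_bij (fun i hi => μ.eraseCell (i, μ.rowLen i - 1)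
    fun _ => notMem_of_lt_of_rowLen_succ_lt (mem_removableRows.1 hi)) (fun i hi => ?_)
    (fun i hi j hj hij => ?_) ?_
  · refine mem_downCovers.2 (eraseCell_covBy _ ?_)
    rw [mem_iff_lt_rowLen]
    have := mem_removableRows.1 hi
    omega
  · have hcells : μ.cells.erase (i, μ.rowLen i - 1) = μ.cells.erase (j, μ.rowLen j - 1) :=
      congrArg cells hij
    have hmem : (i, μ.rowLen i - 1) ∈ μ.cells := by
      rw [mem_cells, mem_iff_lt_rowLen]
      have := mem_removableRows.1 hi
      omega
    by_contra hne
    have : (i, μ.rowLen i - 1) ∈ μ.cells.erase (j, μ.rowLen j - 1) :=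
      mem_erase.2 ⟨fun h => hne (congrArg Prod.fst h), hmem⟩
    exact notMem_erase _ _ (hcells ▸ this)
  · intro ρ hρ
    obtain ⟨⟨i, j⟩, hx, hcells⟩ := exists_cells_eq_insert_of_covBy (mem_downCovers.1 hρ)
    have habove := fun y (hy : (i, j) < y) => notMem_of_lt_of_cells_eq_insert hx hcells hy
    have hj : j < μ.rowLen i := by
      rw [← mem_iff_lt_rowLen, ← mem_cells, hcells]
      exact mem_insert_self _ _
    have hj' : μ.rowLen i ≤ j + 1 := not_lt.1 fun h =>
      habove (i, j + 1) (Prod.mk_lt_mk_iff_right.2 j.lt_succ_self) (mem_iff_lt_rowLen.2 h)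
    have hrow : μ.rowLen (i + 1) ≤ j := not_lt.1 fun h =>
      habove (i + 1, j) (Prod.mk_lt_mk_iff_left.2 i.lt_succ_self) (mem_iff_lt_rowLen.2 h)
    obtain rfl : j = μ.rowLen i - 1 := by omega
    refine ⟨i, mem_removableRows.2 (by omega), YoungDiagram.ext ?_⟩
    change μ.cells.erase _ = ρ.cells
    rw [hcells, erase_insert hx]

theorem card_upCovers_eq_card_downCovers_add_one (ν : YoungDiagram) :
    #(upCovers ν) = #(downCovers ν) + 1 := by
  rw [card_upCovers, card_downCovers]

theorem card_upCovers_inter_upCovers (ν κ : YoungDiagram) :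
    #(upCovers ν ∩ upCovers κ) = #(downCovers ν ∩ downCovers κ) + if ν = κ then 1 else 0 := by
  split_ifs with h
  · rw [h, inter_self, inter_self, card_upCovers_eq_card_downCovers_add_one]
  · rw [← Set.ncard_coe_finset, ← Set.ncard_coe_finset, add_zero]
    convert ncard_setOf_covBy_covBy h using 2 <;> ext <;> simp

/-- `DU = UD + I` for the operators `U`, `D` summing over upper, resp. lower covers. -/
theorem sum_upCovers_sum_downCovers {M : Type*} [AddCommMonoid M] (g : YoungDiagram → M)
    (ν : YoungDiagram) :
    ∑ μ ∈ upCovers ν, ∑ κ ∈ downCovers μ, g κ =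
      ∑ ρ ∈ downCovers ν, ∑ κ ∈ upCovers ρ, g κ + g ν := by
  have hDU : ∑ μ ∈ upCovers ν, ∑ κ ∈ downCovers μ, g κ =
      ∑ κ ∈ withCard ν.card, #(upCovers ν ∩ upCovers κ) • g κ := by
    rw [sum_comm' (t' := withCard ν.card) (s' := fun κ => upCovers ν ∩ upCovers κ)]
    · simp_rw [sum_const]
    · intro μ κ
      simp only [mem_upCovers, mem_downCovers, mem_inter, mem_withCard]
      refine ⟨fun h => ⟨h, ?_⟩, And.left⟩
      have := card_eq_of_covBy h.1
      have := card_eq_of_covBy h.2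
      omega
  have hUD : ∑ ρ ∈ downCovers ν, ∑ κ ∈ upCovers ρ, g κ =
      ∑ κ ∈ withCard ν.card, #(downCovers ν ∩ downCovers κ) • g κ := by
    rw [sum_comm' (t' := withCard ν.card) (s' := fun κ => downCovers ν ∩ downCovers κ)]
    · simp_rw [sum_const]
    · intro ρ κ
      simp only [mem_upCovers, mem_downCovers, mem_inter, mem_withCard]
      refine ⟨fun h => ⟨h, ?_⟩, And.left⟩
      have := card_eq_of_covBy h.1
      have := card_eq_of_covBy h.2
      omega
  simp_rw [hDU, hUD, card_upCovers_inter_upCovers, add_smul, sum_add_distrib, ite_smul, one_smul,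
    zero_smul, sum_ite_eq, mem_withCard, if_true]

theorem sum_upCovers_of_sum_downCovers {M : Type*} [AddCommMonoid M] {f : YoungDiagram → M}
    (hf : ∀ μ, μ ≠ ⊥ → f μ = ∑ ν ∈ downCovers μ, f ν) (ν : YoungDiagram) :
    ∑ μ ∈ upCovers ν, f μ = (ν.card + 1) • f ν := by
  induction hn : ν.card using Nat.strong_induction_on generalizing ν with
  | _ n ih =>
  have hdown : ∀ ρ ∈ downCovers ν, ∑ κ ∈ upCovers ρ, f κ = n • f ρ := fun ρ hρ => by
    have hρ := card_eq_of_covBy (mem_downCovers.1 hρ)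
    rw [ih ρ.card (by omega) ρ rfl, show ρ.card + 1 = n by omega]
  calc ∑ μ ∈ upCovers ν, f μ = ∑ μ ∈ upCovers ν, ∑ κ ∈ downCovers μ, f κ :=
        sum_congr rfl fun μ hμ => hf μ (ne_bot_of_covBy (mem_upCovers.1 hμ))
    _ = n • ∑ ρ ∈ downCovers ν, f ρ + f ν := by
        rw [sum_upCovers_sum_downCovers, sum_congr rfl hdown, smul_sum]
    _ = (n + 1) • f ν := by
        rcases eq_or_ne ν ⊥ with rfl | hν
        · rw [← hn, card_eq_zero_iff.2 rfl, zero_smul, zero_add, zero_add, one_smul]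
        · rw [← hf ν hν, succ_nsmul]

theorem sum_sq_eq_factorial {R : Type*} [CommSemiring R] {f : YoungDiagram → R}
    (hf : ∀ μ, μ ≠ ⊥ → f μ = ∑ ν ∈ downCovers μ, f ν) (hbot : f ⊥ = 1) (n : ℕ) :
    ∑ μ ∈ withCard n, f μ ^ 2 = n ! := by
  induction n with
  | zero => simp [withCard_zero, hbot]
  | succ n ih =>
    calc ∑ μ ∈ withCard (n + 1), f μ ^ 2
        = ∑ μ ∈ withCard (n + 1), ∑ ν ∈ downCovers μ, f ν * f μ := sum_congr rfl fun μ hμ => by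
          have hμ : μ ≠ ⊥ := by
            rw [Ne, ← card_eq_zero_iff, mem_withCard.1 hμ]
            exact n.succ_ne_zero
          rw [sq, ← sum_mul, ← hf μ hμ]
      _ = ∑ ν ∈ withCard n, ∑ μ ∈ upCovers ν, f ν * f μ := by
          refine sum_comm' fun μ ν => ?_
          simp only [mem_withCard, mem_downCovers, mem_upCovers]
          refine ⟨fun h => ⟨h.2, ?_⟩, fun h => ⟨?_, h.1⟩⟩
          · have := card_eq_of_covBy h.2
            omega
          · have := card_eq_of_covBy h.1
            omega
      _ = ∑ ν ∈ withCard n, (n + 1) • f ν ^ 2 := sum_congr rfl fun ν hν => by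
          rw [← mul_sum, sum_upCovers_of_sum_downCovers hf, mem_withCard.1 hν, mul_smul_comm, sq]
      _ = (n + 1)! := by
          rw [← smul_sum, ih, Nat.factorial_succ, nsmul_eq_mul]
          push_cast
          ring

theorem eq_of_sum_downCovers {M : Type*} [AddCommMonoid M] {f g : YoungDiagram → M}
    (hf : ∀ μ, μ ≠ ⊥ → f μ = ∑ ν ∈ downCovers μ, f ν)
    (hg : ∀ μ, μ ≠ ⊥ → g μ = ∑ ν ∈ downCovers μ, g ν) (hbot : f ⊥ = g ⊥) : f = g := by
  funext μ
  induction hn : μ.card using Nat.strong_induction_on generalizing μ with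
  | _ n ih =>
  rcases eq_or_ne μ ⊥ with rfl | hμ
  · exact hbot
  rw [hf μ hμ, hg μ hμ]
  refine sum_congr rfl fun ν hν => ih ν.card ?_ ν rfl
  have := card_eq_of_covBy (mem_downCovers.1 hν)
  omega

end YoungDiagram

namespace IsSYT

open YoungDiagram

variable {μ ν : YoungDiagram} {T : ℕ → ℕ → ℕ}

theorem lt_card (hT : IsSYT μ T) {x : ℕ × ℕ} (hx : x ∈ μ) : T x.1 x.2 < μ.card :=
  hT.2.2.1.mapsTo hx

theorem exists_eq (hT : IsSYT μ T) {k : ℕ} (hk : k < μ.card) : ∃ x ∈ μ, T x.1 x.2 = k :=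
  hT.2.2.1.surjOn hk

theorem eq_zero (hT : IsSYT μ T) {i j : ℕ} (h : (i, j) ∉ μ) : T i j = 0 := hT.2.2.2 i j h

theorem strictMonoOn_row (hT : IsSYT μ T) (i : ℕ) : StrictMonoOn (T i) (Set.Iio (μ.rowLen i)) :=
  strictMonoOn_of_lt_succ Set.ordConnected_Iio fun j _ _ hj => by
    rw [Set.mem_Iio, Order.succ_eq_add_one, ← mem_iff_lt_rowLen] at hj
    exact hT.1 i j hj

theorem strictMonoOn_col (hT : IsSYT μ T) (j : ℕ) :
    StrictMonoOn (T · j) (Set.Iio (μ.colLen j)) :=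
  strictMonoOn_of_lt_succ Set.ordConnected_Iio fun i _ _ hi => by
    rw [Set.mem_Iio, Order.succ_eq_add_one, ← mem_iff_lt_colLen] at hi
    exact hT.2.1 i j hi

theorem lt_of_lt (hT : IsSYT μ T) {x y : ℕ × ℕ} (hy : y ∈ μ) (hxy : x < y) :
    T x.1 x.2 < T y.1 y.2 := by
  have hcorner : (x.1, y.2) ∈ μ := μ.up_left_mem hxy.le.1 le_rfl hy
  have hx : x.2 ∈ Set.Iio (μ.rowLen x.1) :=
    mem_iff_lt_rowLen.1 (μ.up_left_mem le_rfl hxy.le.2 hcorner)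
  have hcy : y.2 ∈ Set.Iio (μ.rowLen x.1) := mem_iff_lt_rowLen.1 hcorner
  have hcx : x.1 ∈ Set.Iio (μ.colLen y.2) := mem_iff_lt_colLen.1 hcorner
  have hyc : y.1 ∈ Set.Iio (μ.colLen y.2) := mem_iff_lt_colLen.1 hy
  rcases Prod.lt_iff.1 hxy with ⟨h1, h2⟩ | ⟨h1, h2⟩
  · exact ((hT.strictMonoOn_row x.1).le_iff_le hx hcy |>.2 h2).trans_lt
      ((hT.strictMonoOn_col y.2).lt_iff_lt hcx hyc |>.2 h1)
  · exact ((hT.strictMonoOn_row x.1).lt_iff_lt hx hcy |>.2 h2).trans_le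
      ((hT.strictMonoOn_col y.2).le_iff_le hcx hyc |>.2 h1)

theorem of_lt (hlt : ∀ x y, x < y → y ∈ μ → T x.1 x.2 < T y.1 y.2)
    (hbij : Set.BijOn (fun c : ℕ × ℕ => T c.1 c.2) ↑μ.cells (Set.Iio μ.card))
    (hzero : ∀ i j, (i, j) ∉ μ → T i j = 0) : IsSYT μ T :=
  ⟨fun i j => hlt (i, j) (i, j + 1) (Prod.mk_lt_mk_iff_right.2 j.lt_succ_self),
    fun i j => hlt (i, j) (i + 1, j) (Prod.mk_lt_mk_iff_left.2 i.lt_succ_self), hbij, hzero⟩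

def sublevel (hT : IsSYT μ T) (k : ℕ) : YoungDiagram where
  cells := μ.cells.filter fun x => T x.1 x.2 < k
  isLowerSet x y hyx hx := by
    simp only [coe_filter, Set.mem_ofPred_eq, mem_cells] at hx ⊢
    refine ⟨μ.isLowerSet hyx hx.1, ?_⟩
    rcases hyx.eq_or_lt with rfl | hlt
    · exact hx.2
    · exact (hT.lt_of_lt hx.1 hlt).trans hx.2

theorem mem_sublevel (hT : IsSYT μ T) {k : ℕ} {x : ℕ × ℕ} :
    x ∈ hT.sublevel k ↔ x ∈ μ ∧ T x.1 x.2 < k :=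
  mem_filter

theorem bijOn_sublevel (hT : IsSYT μ T) {k : ℕ} (hk : k ≤ μ.card) :
    Set.BijOn (fun c : ℕ × ℕ => T c.1 c.2) ↑(hT.sublevel k).cells (Set.Iio k) := by
  refine ⟨fun x hx => (hT.mem_sublevel.1 hx).2,
    hT.2.2.1.injOn.mono fun x hx => (hT.mem_sublevel.1 hx).1, fun v hv => ?_⟩
  obtain ⟨x, hx, rfl⟩ := hT.exists_eq (lt_of_lt_of_le hv hk)
  exact ⟨x, hT.mem_sublevel.2 ⟨hx, hv⟩, rfl⟩

theorem card_sublevel (hT : IsSYT μ T) {k : ℕ} (hk : k ≤ μ.card) : (hT.sublevel k).card = k := by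
  have h := hT.bijOn_sublevel hk
  rw [← coe_range] at h
  exact (card_nbij _ h.mapsTo h.injOn h.surjOn).trans (card_range k)

theorem restrict_sublevel (hT : IsSYT μ T) {k : ℕ} (hk : k ≤ μ.card) :
    IsSYT (hT.sublevel k) fun i j => if (i, j) ∈ hT.sublevel k then T i j else 0 := by
  refine of_lt (fun x y hxy hy => ?_) ?_ fun i j h => if_neg h
  · have hx : (x.1, x.2) ∈ hT.sublevel k := (hT.sublevel k).isLowerSet hxy.le hy
    rw [if_pos hx, if_pos (show (y.1, y.2) ∈ hT.sublevel k from hy)]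
    exact hT.lt_of_lt (hT.mem_sublevel.1 hy).1 hxy
  · rw [hT.card_sublevel hk]
    exact (hT.bijOn_sublevel hk).congr fun x hx => (if_pos hx).symm

theorem extend (hT : IsSYT ν T) (h : ν ⋖ μ) :
    IsSYT μ fun i j => if (i, j) ∈ μ ∧ (i, j) ∉ ν then ν.card else T i j := by
  obtain ⟨x, hx, hcells⟩ := exists_cells_eq_insert_of_covBy h
  have hnew : ∀ y, y ∈ μ ∧ y ∉ ν ↔ y = x := fun y => by
    rw [← mem_cells, hcells, mem_insert, mem_cells]
    constructor
    · rintro ⟨h | h, hy⟩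
      exacts [h, absurd h hy]
    · rintro rfl
      exact ⟨Or.inl rfl, hx⟩
  have hold : ∀ y ∈ ν,
      (if (y.1, y.2) ∈ μ ∧ (y.1, y.2) ∉ ν then ν.card else T y.1 y.2) = T y.1 y.2 :=
    fun y hy => if_neg fun h => h.2 hy
  have hnewval : (if (x.1, x.2) ∈ μ ∧ (x.1, x.2) ∉ ν then ν.card else T x.1 x.2) = ν.card :=
    if_pos ((hnew x).2 rfl)
  refine of_lt (fun y z hyz hz => ?_) ?_ fun i j hij => ?_
  · rcases eq_or_ne z x with rfl | hzx
    · have hy := mem_of_lt_of_cells_eq_insert hcells hyz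
      rw [hold y hy, hnewval]
      exact hT.lt_card hy
    · have hz : z ∈ ν := not_not.1 fun hzν => hzx ((hnew z).1 ⟨hz, hzν⟩)
      rw [hold y (ν.isLowerSet hyz.le hz), hold z hz]
      exact hT.lt_of_lt hz hyz
  · have hbij := (hT.2.2.1.congr fun y hy => (hold y hy).symm).insert (a := x)
      (by rw [hnewval]; exact lt_irrefl ν.card)
    rw [hnewval, ← coe_insert, ← hcells, ← Order.Iio_succ_eq_insert, Order.succ_eq_add_one,
      ← card_eq_of_covBy h] at hbij
    exact hbij
  · rw [if_neg fun h => hij h.1]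
    exact hT.eq_zero fun h' => hij (h.le h')

theorem sublevel_extend (hT : IsSYT ν T) (h : ν ⋖ μ) : (hT.extend h).sublevel ν.card = ν := by
  refine SetLike.ext fun x => ?_
  rw [mem_sublevel]
  split_ifs with hx
  · exact iff_of_false (fun h' => lt_irrefl _ h'.2) hx.2
  · exact ⟨fun h' => not_not.1 fun hxν => hx ⟨h'.1, hxν⟩,
      fun hxν => ⟨h.le hxν, hT.lt_card hxν⟩⟩

end IsSYT

open YoungDiagram

instance (μ : YoungDiagram) : Finite {T : ℕ → ℕ → ℕ // IsSYT μ T} :=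
  Finite.of_injective
    (fun T (x : μ.cells) => (⟨T.1 x.1.1 x.1.2, T.2.lt_card x.2⟩ : Fin μ.card))
    fun S T h => Subtype.ext <| funext₂ fun i j => by
      by_cases hij : (i, j) ∈ μ
      · exact congrArg Fin.val (congrFun h ⟨(i, j), hij⟩)
      · rw [S.2.eq_zero hij, T.2.eq_zero hij]

def sytEquivSigmaDownCovers {μ : YoungDiagram} {n : ℕ} (hn : μ.card = n + 1) :
    {T : ℕ → ℕ → ℕ // IsSYT μ T} ≃ Σ ν : downCovers μ, {T : ℕ → ℕ → ℕ // IsSYT ν.1 T} where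
  toFun T := ⟨⟨T.2.sublevel n, mem_downCovers.2 <| covBy_iff_le_and_card_eq.2
      ⟨filter_subset _ _, by rw [T.2.card_sublevel (by omega), hn]⟩⟩,
    ⟨_, T.2.restrict_sublevel (by omega)⟩⟩
  invFun p := ⟨_, p.2.2.extend (mem_downCovers.1 p.1.2)⟩
  left_inv T := Subtype.ext <| funext₂ fun i j => by
    change (if (i, j) ∈ μ ∧ (i, j) ∉ T.2.sublevel n then (T.2.sublevel n).card
      else if (i, j) ∈ T.2.sublevel n then T.1 i j else 0) = T.1 i j
    by_cases hs : (i, j) ∈ T.2.sublevel n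
    · rw [if_neg fun h => h.2 hs, if_pos hs]
    by_cases hμ : (i, j) ∈ μ
    · rw [if_pos ⟨hμ, hs⟩, T.2.card_sublevel (by omega)]
      have hlt : T.1 i j < n + 1 := hn ▸ T.2.lt_card hμ
      have hge : ¬T.1 i j < n := fun h => hs (T.2.mem_sublevel.2 ⟨hμ, h⟩)
      omega
    · rw [if_neg fun h => hμ h.1, if_neg hs, T.2.eq_zero hμ]
  right_inv := by
    rintro ⟨⟨ν, hν⟩, ⟨T, hT⟩⟩
    obtain rfl : n = ν.card := by
      have := card_eq_of_covBy (mem_downCovers.1 hν)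
      omega
    have hcov := mem_downCovers.1 hν
    refine Sigma.subtype_ext (Subtype.ext (hT.sublevel_extend hcov)) (funext₂ fun i j => ?_)
    change (if (i, j) ∈ (hT.extend hcov).sublevel ν.card then
      (if (i, j) ∈ μ ∧ (i, j) ∉ ν then ν.card else T i j) else 0) = T i j
    rw [hT.sublevel_extend hcov]
    split_ifs with h₁ h₂
    · exact absurd h₁ h₂.2
    · rfl
    · exact (hT.eq_zero h₁).symm

noncomputable def numSYT (μ : YoungDiagram) : ℕ := Nat.card {T : ℕ → ℕ → ℕ // IsSYT μ T}

theorem numSYT_eq_sum_downCovers {μ : YoungDiagram} (hμ : μ ≠ ⊥) :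
    numSYT μ = ∑ ν ∈ downCovers μ, numSYT ν := by
  obtain ⟨n, hn⟩ := Nat.exists_eq_succ_of_ne_zero (card_eq_zero_iff.not.2 hμ)
  rw [numSYT, Nat.card_congr (sytEquivSigmaDownCovers hn), Nat.card_sigma]
  exact sum_coe_sort (downCovers μ) numSYT

theorem numSYT_bot : numSYT ⊥ = 1 := by
  refine Nat.card_eq_one_iff_unique.2 ⟨⟨fun S T => Subtype.ext <| funext₂ fun i j => ?_⟩, ?_⟩
  · rw [S.2.eq_zero (notMem_bot _), T.2.eq_zero (notMem_bot _)]
  · refine ⟨⟨fun _ _ => 0, IsSYT.of_lt (fun _ y _ hy => absurd hy (notMem_bot y)) ?_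
      fun _ _ _ => rfl⟩⟩
    simp [Set.bijOn_empty_iff_left]

namespace IsSaturatedChain

variable {n : ℕ} {μ ν : YoungDiagram} {c : Fin (n + 2) → YoungDiagram}

theorem init (hc : IsSaturatedChain (n + 1) μ c) :
    IsSaturatedChain n (c (Fin.last n).castSucc) (Fin.init c) :=
  ⟨hc.1, rfl, fun i => by simpa only [Fin.init, Fin.succ_castSucc] using hc.2.2 i.castSucc⟩

theorem penultimate_covBy (hc : IsSaturatedChain (n + 1) μ c) : c (Fin.last n).castSucc ⋖ μ := by
  simpa only [Fin.succ_last, hc.2.1] using hc.2.2 (Fin.last n)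

theorem snoc {c : Fin (n + 1) → YoungDiagram} (hc : IsSaturatedChain n ν c) (h : ν ⋖ μ) :
    IsSaturatedChain (n + 1) μ (Fin.snoc c μ : Fin (n + 2) → YoungDiagram) := by
  refine ⟨by simpa only [← Fin.castSucc_zero, Fin.snoc_castSucc] using hc.1, Fin.snoc_last _ _,
    Fin.lastCases ?_ fun i => ?_⟩
  · simpa only [Fin.snoc_castSucc, Fin.succ_last, Fin.snoc_last, hc.2.1] using h
  · rw [Fin.succ_castSucc, Fin.snoc_castSucc, Fin.snoc_castSucc]
    exact hc.2.2 i

end IsSaturatedChain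

def saturatedChainsEquivSigmaDownCovers (n : ℕ) (μ : YoungDiagram) :
    {c : Fin (n + 2) → YoungDiagram // IsSaturatedChain (n + 1) μ c} ≃
      Σ ν : downCovers μ, {c : Fin (n + 1) → YoungDiagram // IsSaturatedChain n ν.1 c} where
  toFun c := ⟨⟨_, mem_downCovers.2 c.2.penultimate_covBy⟩, ⟨_, c.2.init⟩⟩
  invFun p := ⟨_, p.2.2.snoc (mem_downCovers.1 p.1.2)⟩
  left_inv c := Subtype.ext <| by
    conv_rhs => rw [← Fin.snoc_init_self c.1, c.2.2.1]
  right_inv p := Sigma.subtype_ext (Subtype.ext <| by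
    simpa only [Fin.snoc_castSucc] using p.2.2.2.1) (Fin.init_snoc (α := fun _ => _) μ p.2.1)

instance (μ : YoungDiagram) :
    Subsingleton {c : Fin (0 + 1) → YoungDiagram // IsSaturatedChain 0 μ c} :=
  ⟨fun c d => Subtype.ext <| funext fun i => by rw [Fin.fin_one_eq_zero i, c.2.1, d.2.1]⟩

instance finite_saturatedChains : ∀ (n : ℕ) (μ : YoungDiagram),
    Finite {c : Fin (n + 1) → YoungDiagram // IsSaturatedChain n μ c}
  | 0, _ => Finite.of_subsingleton
  | n + 1, μ =>
    have := finite_saturatedChains n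
    Finite.of_equiv _ (saturatedChainsEquivSigmaDownCovers n μ).symm

noncomputable def numSaturatedChains (μ : YoungDiagram) : ℕ :=
  Nat.card {c : Fin (μ.card + 1) → YoungDiagram // IsSaturatedChain μ.card μ c}

theorem numSaturatedChains_eq_sum_downCovers {μ : YoungDiagram} (hμ : μ ≠ ⊥) :
    numSaturatedChains μ = ∑ ν ∈ downCovers μ, numSaturatedChains ν := by
  obtain ⟨n, hn⟩ := Nat.exists_eq_succ_of_ne_zero (card_eq_zero_iff.not.2 hμ)
  rw [numSaturatedChains, hn, Nat.card_congr (saturatedChainsEquivSigmaDownCovers n μ),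
    Nat.card_sigma, ← sum_coe_sort (downCovers μ)]
  refine sum_congr rfl fun ν _ => ?_
  have hν : ν.1.card = n :=
    Nat.succ_injective ((card_eq_of_covBy (mem_downCovers.1 ν.2)).symm.trans hn)
  rw [numSaturatedChains, hν]

theorem numSaturatedChains_bot : numSaturatedChains ⊥ = 1 := by
  rw [numSaturatedChains, card_eq_zero_iff.2 rfl]
  exact Nat.card_eq_one_iff_unique.2 ⟨inferInstance, ⟨⟨fun _ => ⊥, rfl, rfl, Fin.elim0⟩⟩⟩

/-- In Young's lattice, the number of saturated chains from `∅` to a diagram `μ`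
of size `n` equals `f^μ`, the number of standard Young tableaux of shape `μ`;
moreover `Σ_{λ ⊢ n} (f^λ)² = n!`. -/
theorem saturated_chains_eq_syt_and_sum_of_squares (n : ℕ) :
    (∀ μ : YoungDiagram, μ.card = n →
      Nat.card {c : Fin (n + 1) → YoungDiagram // IsSaturatedChain n μ c} =
        Nat.card {T : ℕ → ℕ → ℕ // IsSYT μ T}) ∧
    Nat.card (Σ μ : {μ : YoungDiagram // μ.card = n},
        {T : ℕ → ℕ → ℕ // IsSYT μ.1 T} × {T : ℕ → ℕ → ℕ // IsSYT μ.1 T}) =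
      Nat.factorial n := by
  have hchains : numSaturatedChains = numSYT :=
    eq_of_sum_downCovers (fun _ => numSaturatedChains_eq_sum_downCovers)
      (fun _ => numSYT_eq_sum_downCovers) (numSaturatedChains_bot.trans numSYT_bot.symm)
  refine ⟨fun μ hμ => ?_, ?_⟩
  · subst hμ
    exact congrFun hchains μ
  · have : Fintype {μ : YoungDiagram // μ.card = n} :=
      Fintype.subtype (withCard n) fun _ => mem_withCard
    rw [Nat.card_sigma]
    simp only [Nat.card_prod]
    refine (sum_subtype (withCard n) (fun _ => mem_withCard)
      fun μ => numSYT μ * numSYT μ).symm.trans ?_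
    simpa only [sq, Nat.cast_id] using
      sum_sq_eq_factorial (fun _ => numSYT_eq_sum_downCovers) numSYT_bot n
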